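/- arXiv:2012.15581 — 2 statements merged into one kernel-verified Lean document; each statement's English description precedes it below -/
import Mathlib

section
/- Let c ∈ ℝ, let σ > 0, and let r ∈ ℕ. Then the improper integral ∫_{r+1}^∞ (c·exp(−σp))²·(2/(2p+1)) dp converges and equals c²·exp(σ)·∫_{(2r+3)σ}^∞ exp(−t)/t dt. Consequently, the a posteriori spectral error indicator ε(c,σ) = sqrt( 2a_r²/(2r+1) + ∫_{r+1}^∞ (c e^{−σp})²·2/(2p+1) dp ) admits the closed form ε(c,σ) = sqrt( 2a_r²/(2r+1) + c² e^{σ} E₁((2r+3)σ) ) for any a_r ∈ ℝ, where E₁(z) = ∫_z^∞ e^{−t}/t dt. -/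
/-!
The substitution `t = σ (2p + 1)` turns `(c e^{-σp})² · 2/(2p+1) dp` into `c² e^σ · e^{-t}/t dt`
and maps `(r + 1, ∞)` onto `((2r + 3)σ, ∞)`. Convergence comes from `e^{-t}/t ≤ e^{-t}/z` on
`(z, ∞)` for `z > 0`.
-/

open MeasureTheory Set Real

section AffineChangeOfVariables

variable {E : Type*} [NormedAddCommGroup E]

theorem integral_comp_add_right_Ioi [NormedSpace ℝ E] (g : ℝ → E) (a d : ℝ) :
    ∫ x in Ioi a, g (x + d) = ∫ x in Ioi (a + d), g x := by
  simpa using (measurePreserving_add_right volume d).setIntegral_preimage_emb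
    (measurableEmbedding_addRight d) g (Ioi (a + d))

theorem integrableOn_Ioi_comp_add_right_iff (g : ℝ → E) (a d : ℝ) :
    IntegrableOn (fun x => g (x + d)) (Ioi a) ↔ IntegrableOn g (Ioi (a + d)) := by
  simpa [Function.comp_def] using (measurePreserving_add_right volume d).integrableOn_comp_preimage
    (measurableEmbedding_addRight d) (f := g) (s := Ioi (a + d))

theorem integral_comp_mul_add_Ioi [NormedSpace ℝ E] (g : ℝ → E) (a d : ℝ) {b : ℝ} (hb : 0 < b) :
    ∫ x in Ioi a, g (b * x + d) = b⁻¹ • ∫ x in Ioi (b * a + d), g x := by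
  rw [integral_comp_mul_left_Ioi (fun x => g (x + d)) a hb, integral_comp_add_right_Ioi]

theorem integrableOn_Ioi_comp_mul_add_iff (g : ℝ → E) (a d : ℝ) {b : ℝ} (hb : 0 < b) :
    IntegrableOn (fun x => g (b * x + d)) (Ioi a) ↔ IntegrableOn g (Ioi (b * a + d)) := by
  rw [integrableOn_Ioi_comp_mul_left_iff (fun x => g (x + d)) a hb,
    integrableOn_Ioi_comp_add_right_iff]

end AffineChangeOfVariables

theorem integrableOn_exp_neg_div_self_Ioi {z : ℝ} (hz : 0 < z) :
    IntegrableOn (fun t => exp (-t) / t) (Ioi z) := by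
  refine ((exp_neg_integrableOn_Ioi z one_pos).div_const z).mono' ?_ ?_
  · exact (by fun_prop : Measurable fun t : ℝ => exp (-t) / t).aestronglyMeasurable
  · filter_upwards [ae_restrict_mem measurableSet_Ioi] with t (ht : z < t)
    have ht0 : 0 < t := hz.trans ht
    rw [norm_of_nonneg (by positivity), neg_one_mul]
    exact div_le_div_of_nonneg_left (exp_pos _).le hz ht.le

-- At `2p + 1 = 0` both sides are `0` by the convention `x / 0 = 0`.
theorem sq_mul_exp_mul_two_div_eq (c : ℝ) {σ : ℝ} (hσ : σ ≠ 0) (p : ℝ) :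
    (c * exp (-σ * p)) ^ 2 * (2 / (2 * p + 1))
      = c ^ 2 * exp σ * (2 * σ) * (exp (-(2 * σ * p + σ)) / (2 * σ * p + σ)) := by
  rcases eq_or_ne (2 * p + 1) 0 with hp | hp
  · rw [show 2 * σ * p + σ = σ * (2 * p + 1) by ring, hp]
    simp
  · rw [mul_pow, ← exp_nat_mul, show 2 * σ * p + σ = σ * (2 * p + 1) by ring,
      show -(σ * (2 * p + 1)) = -σ + (2 : ℕ) * (-σ * p) by push_cast; ring, exp_add, exp_neg σ]
    field_simp

/-- The spectral a posteriori error indicator: closed form of the continuation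
integral.  For `c ∈ ℝ`, `σ > 0` and `r ∈ ℕ`, the improper integral
`∫_{r+1}^∞ (c e^{-σ p})² · 2/(2p+1) dp` converges and equals
`c² e^{σ} E₁((2r+3)σ)` where `E₁(z) = ∫_z^∞ e^{-t}/t dt`; consequently the error
indicator `ε(c,σ)` admits the stated closed form. -/
theorem spectral_error_indicator_closed_form
    (c σ : ℝ) (hσ : 0 < σ) (r : ℕ) :
    IntegrableOn (fun p : ℝ => (c * Real.exp (-σ * p)) ^ 2 * (2 / (2 * p + 1)))
      (Set.Ioi ((r : ℝ) + 1)) volume ∧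
    (∫ p in Set.Ioi ((r : ℝ) + 1), (c * Real.exp (-σ * p)) ^ 2 * (2 / (2 * p + 1)))
      = c ^ 2 * Real.exp σ *
        ∫ t in Set.Ioi ((2 * (r : ℝ) + 3) * σ), Real.exp (-t) / t ∧
    ∀ a_r : ℝ,
      Real.sqrt (2 * a_r ^ 2 / (2 * (r : ℝ) + 1) +
        ∫ p in Set.Ioi ((r : ℝ) + 1), (c * Real.exp (-σ * p)) ^ 2 * (2 / (2 * p + 1)))
      = Real.sqrt (2 * a_r ^ 2 / (2 * (r : ℝ) + 1) +
        c ^ 2 * Real.exp σ *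
          ∫ t in Set.Ioi ((2 * (r : ℝ) + 3) * σ), Real.exp (-t) / t) := by
  have h2σ : 0 < 2 * σ := by positivity
  have hlower : 2 * σ * ((r : ℝ) + 1) + σ = (2 * (r : ℝ) + 3) * σ := by ring
  have hE₁ : IntegrableOn (fun t => exp (-t) / t) (Ioi ((2 * (r : ℝ) + 3) * σ)) :=
    integrableOn_exp_neg_div_self_Ioi (by positivity)
  simp_rw [sq_mul_exp_mul_two_div_eq c hσ.ne']
  have hintegral : ∫ p in Ioi ((r : ℝ) + 1),
      c ^ 2 * exp σ * (2 * σ) * (exp (-(2 * σ * p + σ)) / (2 * σ * p + σ))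
        = c ^ 2 * exp σ * ∫ t in Ioi ((2 * (r : ℝ) + 3) * σ), exp (-t) / t := by
    rw [integral_const_mul, integral_comp_mul_add_Ioi (fun t => exp (-t) / t) _ _ h2σ, hlower,
      smul_eq_mul]
    field_simp
  refine ⟨?_, hintegral, fun a_r => by rw [hintegral]⟩
  rw [← hlower, ← integrableOn_Ioi_comp_mul_add_iff (fun t => exp (-t) / t) _ _ h2σ] at hE₁
  exact hE₁.const_mul _
end

section
/- Let n ≥ 1. Define on ℝ[x₁, …, xₙ] the barycentric coordinate polynomials λ₀ = 1 − (x₁ + … + xₙ) and λ_j = x_j for 1 ≤ j ≤ n, the operators D_{ij} = ∂/∂x_j − ∂/∂x_i for 0 ≤ i < j ≤ n (with ∂/∂x₀ = 0), and the Braess–Schwab operator 𝓛u = −Σ_{0 ≤ i < j ≤ n} D_{ij}( λ_i λ_j D_{ij} u ). Then for every p ∈ ℕ there exists a nonzero polynomial u ∈ ℝ[x₁, …, xₙ] of total degree exactly p satisfying the eigenvalue equation 𝓛u = p(p+n)·u. In particular p(p+n) is an eigenvalue of 𝓛 for every p. -/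
open MvPolynomial

/-- Formal partial derivatives `∂/∂x_i` on `ℝ[x₁,…,xₙ]`, indexed by
`i ∈ {0,…,n}` with the convention `∂/∂x₀ = 0`. -/
noncomputable def pd (n : ℕ) : Fin (n + 1) → (MvPolynomial (Fin n) ℝ →ₗ[ℝ] MvPolynomial (Fin n) ℝ) :=
  Fin.cases 0 (fun j => (pderiv j).toLinearMap)

/-- The edge operator `D_{ij} = ∂/∂x_j − ∂/∂x_i` (with `∂/∂x₀ = 0`). -/
noncomputable def Dop (n : ℕ) (i j : Fin (n + 1)) :
    MvPolynomial (Fin n) ℝ →ₗ[ℝ] MvPolynomial (Fin n) ℝ :=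
  pd n j - pd n i

/-- The barycentric coordinate polynomials of the reference `n`-simplex:
`λ₀ = 1 − (x₁ + … + xₙ)` and `λ_j = x_j` for `1 ≤ j ≤ n`. -/
noncomputable def lam (n : ℕ) : Fin (n + 1) → MvPolynomial (Fin n) ℝ :=
  Fin.cases (1 - ∑ j : Fin n, X j) (fun j => X j)

/-- The Braess–Schwab operator
`𝓛 u = −Σ_{0 ≤ i < j ≤ n} D_{ij}( λ_i λ_j D_{ij} u )`. -/
noncomputable def braessSchwab (n : ℕ) :
    MvPolynomial (Fin n) ℝ →ₗ[ℝ] MvPolynomial (Fin n) ℝ :=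
  - ∑ i : Fin (n + 1), ∑ j : Fin (n + 1),
      if i < j then
        (Dop n i j) ∘ₗ (LinearMap.mulLeft ℝ (lam n i * lam n j)) ∘ₗ (Dop n i j)
      else 0

/-!
With the Euler operator `E = ∑ b, X b * ∂_b`, the Braess–Schwab operator is
`𝓛 = (E + n) E - ∑ a, ∂_a X a ∂_a`: split off the pairs `(0, j)` and symmetrise the sum over
the pairs `1 ≤ i < j`. Euler's identity then gives
`𝓛 (x₁ ^ k) = k (k + n) x₁ ^ k - k² x₁ ^ (k - 1)`, so on `1, x₁, …, x₁ ^ p` the operator is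
bidiagonal with the pairwise distinct diagonal entries `k (k + n)`. An eigenvector for `p (p + n)`
with leading coefficient `1` is obtained by solving for its coefficients downwards from the top
one.
-/

open Finset

section Lowering

variable {K V : Type*} [Field K] [AddCommGroup V] [Module K V]

noncomputable def loweringEigencoeff (a b : ℕ → K) (p k : ℕ) : K :=
  if k < p then b (k + 1) * loweringEigencoeff a b p (k + 1) / (a k - a p) else 1
termination_by p - k

lemma loweringEigencoeff_self (a b : ℕ → K) (p : ℕ) : loweringEigencoeff a b p p = 1 := by
  rw [loweringEigencoeff, if_neg (lt_irrefl p)]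

lemma sub_mul_loweringEigencoeff {a b : ℕ → K} {p k : ℕ} (hk : k < p) (hak : a k ≠ a p) :
    (a k - a p) * loweringEigencoeff a b p k = b (k + 1) * loweringEigencoeff a b p (k + 1) := by
  rw [loweringEigencoeff, if_pos hk, mul_div_cancel₀ _ (sub_ne_zero.mpr hak)]

theorem map_sum_loweringEigencoeff_smul (f : V →ₗ[K] V) (v : ℕ → V) (a b : ℕ → K)
    (hf₀ : f (v 0) = a 0 • v 0)
    (hf : ∀ k, f (v (k + 1)) = a (k + 1) • v (k + 1) - b (k + 1) • v k)
    {p : ℕ} (hp : ∀ k < p, a k ≠ a p) :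
    f (∑ k ∈ range (p + 1), loweringEigencoeff a b p k • v k) =
      a p • ∑ k ∈ range (p + 1), loweringEigencoeff a b p k • v k := by
  set c := loweringEigencoeff a b p
  -- `f - a p` sends `c k • v k` to `T k - T (k - 1)`, so the sum telescopes to `T p = 0`.
  set T : ℕ → V := fun k => ((a k - a p) * c k) • v k
  have hstep : ∀ k < p,
      f (c (k + 1) • v (k + 1)) - a p • c (k + 1) • v (k + 1) = T (k + 1) - T k := by
    intro k hk
    have hc : (a k - a p) * c k = b (k + 1) * c (k + 1) := sub_mul_loweringEigencoeff hk (hp k hk)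
    simp only [T, map_smul, hf]
    linear_combination (norm := module) hc • v k
  rw [← sub_eq_zero, map_sum, smul_sum, ← sum_sub_distrib, sum_range_succ', sum_congr rfl
    fun k hk => hstep k (mem_range.mp hk), sum_range_sub]
  simp only [T, map_smul, hf₀, sub_self, zero_mul, zero_smul]
  module

end Lowering

lemma sum_sum_ite_lt_add_swap {ι M : Type*} [Fintype ι] [LinearOrder ι] [AddCommMonoid M]
    (F : ι → ι → M) (hF : ∀ i, F i i = 0) :
    ∑ i, ∑ j, (if i < j then F i j + F j i else 0) = ∑ i, ∑ j, F i j := by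
  have hsplit : ∀ i j, F i j = (if i < j then F i j else 0) + (if j < i then F i j else 0) := by
    intro i j
    rcases lt_trichotomy i j with h | rfl | h
    · simp [h, h.not_gt]
    · simp [hF]
    · simp [h, h.not_gt]
  calc ∑ i, ∑ j, (if i < j then F i j + F j i else 0)
      = ∑ i, ∑ j, (if i < j then F i j else 0) + ∑ i, ∑ j, (if i < j then F j i else 0) := by
        simp only [← sum_add_distrib, ite_add_ite, add_zero]
    _ = ∑ i, ∑ j, ((if i < j then F i j else 0) + (if j < i then F i j else 0)) := by
        rw [sum_comm (f := fun i j => if i < j then F j i else 0)]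
        simp only [sum_add_distrib]
    _ = ∑ i, ∑ j, F i j := by simp only [← hsplit]

section

variable {σ R : Type*} [CommSemiring R]

lemma sum_pderiv_X_mul_of_isHomogeneous [Fintype σ] {w : MvPolynomial σ R} {m : ℕ}
    (hw : w.IsHomogeneous m) :
    ∑ a, pderiv a (X a * w) = (Fintype.card σ + m) • w := by
  simp only [pderiv_mul, pderiv_X_self, one_mul, sum_add_distrib, hw.sum_X_mul_pderiv, sum_const,
    card_univ, add_smul]

lemma pderiv_X_pow_succ_self (e : σ) (k : ℕ) :
    pderiv e (X e ^ (k + 1) : MvPolynomial σ R) = (k + 1) • X e ^ k := by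
  rw [pderiv_pow, pderiv_X_self, mul_one, Nat.add_sub_cancel, nsmul_eq_mul, Nat.cast_succ]

lemma sum_pderiv_X_mul_pderiv_X_pow_succ [Fintype σ] (e : σ) (k : ℕ) :
    ∑ a, pderiv a (X a * pderiv a (X e ^ (k + 1) : MvPolynomial σ R)) =
      ((k + 1) * (k + 1)) • X e ^ k := by
  rw [sum_eq_single e (fun a _ hae => by rw [pderiv_pow, pderiv_X_of_ne hae.symm]; simp)
    (by simp), pderiv_X_pow_succ_self, mul_smul_comm, ← pow_succ', map_nsmul,
    pderiv_X_pow_succ_self, smul_smul]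

lemma coeff_single_sum_smul_X_pow (e : σ) (c : ℕ → R) (p : ℕ) :
    coeff (Finsupp.single e p) (∑ k ∈ range (p + 1), c k • X e ^ k) = c p := by
  classical
  simp only [coeff_sum, coeff_smul, coeff_X_pow, (Finsupp.single_injective e).eq_iff, smul_eq_mul,
    mul_ite, mul_one, mul_zero, sum_ite_eq', self_mem_range_succ, if_true]

lemma totalDegree_sum_smul_X_pow {e : σ} {c : ℕ → R} {p : ℕ} (hc : c p ≠ 0) :
    (∑ k ∈ range (p + 1), c k • (X e ^ k : MvPolynomial σ R)).totalDegree = p := by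
  have : Nontrivial R := ⟨⟨c p, 0, hc⟩⟩
  refine le_antisymm (totalDegree_finsetSum_le fun k hk => ?_) ?_
  · exact (totalDegree_smul_le _ _).trans
      ((totalDegree_X_pow e k).trans_le (Nat.lt_succ_iff.mp (mem_range.mp hk)))
  · have hmem : Finsupp.single e p ∈
        (∑ k ∈ range (p + 1), c k • (X e ^ k : MvPolynomial σ R)).support := by
      rwa [mem_support_iff, coeff_single_sum_smul_X_pow]
    simpa using le_totalDegree hmem

lemma sum_smul_X_pow_ne_zero {e : σ} {c : ℕ → R} {p : ℕ} (hc : c p ≠ 0) :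
    ∑ k ∈ range (p + 1), c k • (X e ^ k : MvPolynomial σ R) ≠ 0 := by
  intro h
  exact hc (by simpa [coeff_single_sum_smul_X_pow] using congrArg (coeff (Finsupp.single e p)) h)

end

lemma pd_zero (n : ℕ) : pd n 0 = 0 := rfl
lemma lam_zero (n : ℕ) : lam n 0 = 1 - ∑ j : Fin n, X j := rfl
lemma pd_succ (n : ℕ) (j : Fin n) : pd n j.succ = (pderiv j).toLinearMap := rfl
lemma lam_succ (n : ℕ) (j : Fin n) : lam n j.succ = X j := rfl

lemma braessSchwab_apply_eq_sum_pderiv (n : ℕ) (u : MvPolynomial (Fin n) ℝ) :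
    braessSchwab n u =
      ∑ a, pderiv a (X a * ∑ b, X b * pderiv b u) - ∑ a, pderiv a (X a * pderiv a u) := by
  set G : Fin n → Fin n → MvPolynomial (Fin n) ℝ := fun a b =>
    pderiv a (X a * X b * pderiv a u) - pderiv a (X a * X b * pderiv b u)
  have hrow : ∑ b, pderiv b ((1 - ∑ j, X j) * X b * pderiv b u) =
      ∑ b, pderiv b (X b * pderiv b u) - ∑ b, pderiv b (X b * (∑ j, X j) * pderiv b u) := by
    rw [← sum_sub_distrib]
    refine sum_congr rfl fun b _ => ?_
    rw [← map_sub]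
    ring_nf
  have hedge : ∀ a b, pderiv b (X a * X b * (pderiv b u - pderiv a u)) -
      pderiv a (X a * X b * (pderiv b u - pderiv a u)) = G a b + G b a := by
    intro a b
    simp only [G, mul_sub, map_sub, mul_comm (X b) (X a)]
    abel
  have hG : ∑ a, ∑ b, G a b =
      ∑ a, pderiv a (X a * (∑ j, X j) * pderiv a u) -
        ∑ a, pderiv a (X a * ∑ b, X b * pderiv b u) := by
    rw [← sum_sub_distrib]
    refine sum_congr rfl fun a _ => ?_
    simp only [G, sum_sub_distrib, ← map_sum, ← sum_mul, ← mul_sum, mul_assoc]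
  rw [braessSchwab, LinearMap.neg_apply]
  simp only [LinearMap.sum_apply, LinearMap.zero_apply,
    apply_ite (fun f : MvPolynomial (Fin n) ℝ →ₗ[ℝ] MvPolynomial (Fin n) ℝ => f u)]
  simp only [Fin.sum_univ_succ, Fin.succ_pos, Fin.not_lt_zero, Fin.succ_lt_succ_iff, if_true,
    if_false, Dop, pd_zero, pd_succ, lam_zero, lam_succ, LinearMap.comp_apply,
    LinearMap.mulLeft_apply, LinearMap.sub_apply, LinearMap.zero_apply, Derivation.coeFn_coe,
    zero_add, sub_zero, hedge, sum_sum_ite_lt_add_swap G (fun a => sub_self _), hrow, hG]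
  abel

lemma braessSchwab_apply_of_isHomogeneous {n m : ℕ} {u : MvPolynomial (Fin n) ℝ}
    (hu : u.IsHomogeneous m) :
    braessSchwab n u = (m * (m + n)) • u - ∑ a, pderiv a (X a * pderiv a u) := by
  rw [braessSchwab_apply_eq_sum_pderiv, hu.sum_X_mul_pderiv]
  simp only [mul_smul_comm, map_nsmul, ← smul_sum, sum_pderiv_X_mul_of_isHomogeneous hu,
    Fintype.card_fin, smul_smul]
  ring_nf

lemma braessSchwab_X_pow_succ {n : ℕ} (e : Fin n) (k : ℕ) :
    braessSchwab n (X e ^ (k + 1)) =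
      ((k + 1) * (k + 1 + n)) • X e ^ (k + 1) - ((k + 1) * (k + 1)) • X e ^ k := by
  rw [braessSchwab_apply_of_isHomogeneous (isHomogeneous_X_pow e (k + 1)),
    sum_pderiv_X_mul_pderiv_X_pow_succ]

lemma braessSchwab_one (n : ℕ) : braessSchwab n 1 = 0 := by
  simp [braessSchwab_apply_eq_sum_pderiv]

/-- For every `p ∈ ℕ` there is a nonzero polynomial of total degree exactly `p`
that is an eigenfunction of the Braess–Schwab operator for the eigenvalue
`p(p+n)`; in particular `p(p+n)` is an eigenvalue of `𝓛` for every `p`. -/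
theorem braessSchwab_eigenvalue_exists
    (n : ℕ) (hn : 1 ≤ n) (p : ℕ) :
    ∃ u : MvPolynomial (Fin n) ℝ, u ≠ 0 ∧ u.totalDegree = p ∧
      braessSchwab n u = ((p * (p + n) : ℕ) : ℝ) • u := by
  let e : Fin n := ⟨0, hn⟩
  let a : ℕ → ℝ := fun k => ((k * (k + n) : ℕ) : ℝ)
  let b : ℕ → ℝ := fun k => ((k * k : ℕ) : ℝ)
  have hL₀ : braessSchwab n (X e ^ 0) = a 0 • X e ^ 0 := by simp [a, braessSchwab_one]
  have hL : ∀ k,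
      braessSchwab n (X e ^ (k + 1)) = a (k + 1) • X e ^ (k + 1) - b (k + 1) • X e ^ k := by
    intro k
    simp only [a, b, braessSchwab_X_pow_succ, Nat.cast_smul_eq_nsmul]
  have ha : ∀ k < p, a k ≠ a p := fun k hk =>
    Nat.cast_injective.ne (Nat.mul_lt_mul'' hk (Nat.add_lt_add_right hk n)).ne
  have hc : loweringEigencoeff a b p p ≠ 0 := by rw [loweringEigencoeff_self]; exact one_ne_zero
  exact ⟨_, sum_smul_X_pow_ne_zero hc, totalDegree_sum_smul_X_pow hc,
    map_sum_loweringEigencoeff_smul _ _ a b hL₀ hL ha⟩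
end
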